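/- Let γ, β be real numbers with β not a nonpositive integer. Then the function g(z) = M(γ, β, z) is twice continuously differentiable on ℝ and satisfies Kummer's differential equation z·g''(z) + (β − z)·g'(z) − γ·g(z) = 0 for all z ∈ ℝ. -/

import Mathlib

open Real Filter Polynomial

/-- Confluent hypergeometric function of the first kind,
`M(γ,β,z) = ∑ (γ)⁽ⁿ⁾ zⁿ / ((β)⁽ⁿ⁾ n!)`. -/
noncomputable def M (γ β z : ℝ) : ℝ :=
  ∑' n : ℕ, ((ascPochhammer ℝ n).eval γ * z ^ n) /
    ((ascPochhammer ℝ n).eval β * (Nat.factorial n : ℝ))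

/-!
The coefficients `aₙ = (γ)⁽ⁿ⁾ / ((β)⁽ⁿ⁾ n!)` satisfy `aₙ₊₁ = (γ + n) / ((β + n)(n + 1)) · aₙ`, so
by the ratio test the series has infinite radius of convergence and `M(γ, β, ·)` is entire. Its
derivatives are the termwise derivatives, and the coefficient of `zⁿ` in
`z g'' + (β - z) g' - γ g` is `(n + β)(n + 1) aₙ₊₁ - (n + γ) aₙ`, which vanishes by the same
recurrence as soon as `β + n ≠ 0`.
-/

open FormalMultilinearSeries Topology

section ScalarPowerSeries

variable {𝕜 : Type*} [NontriviallyNormedField 𝕜]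

theorem FormalMultilinearSeries.ofScalars_radius_eq_top_of_norm_succ_le {a : ℕ → 𝕜}
    {t : ℕ → ℝ} (ht : Tendsto t atTop (𝓝 0)) (h : ∀ n, ‖a (n + 1)‖ ≤ t n * ‖a n‖) :
    (ofScalars 𝕜 a).radius = ⊤ := by
  refine radius_eq_top_of_summable_norm _ fun r ↦ ?_
  simp only [ofScalars_norm]
  refine summable_of_ratio_norm_eventually_le (r := 1 / 2) (by norm_num) ?_
  filter_upwards [(ht.mul_const (r : ℝ)).eventually
    (eventually_le_nhds (by simp : (0 : ℝ) * r < 1 / 2))] with n hn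
  simp only [norm_mul, norm_norm, norm_pow, NNReal.norm_eq, pow_succ]
  calc ‖a (n + 1)‖ * ((r : ℝ) ^ n * r) ≤ t n * ‖a n‖ * ((r : ℝ) ^ n * r) := by gcongr; exact h n
    _ = t n * r * (‖a n‖ * (r : ℝ) ^ n) := by ring
    _ ≤ 1 / 2 * (‖a n‖ * (r : ℝ) ^ n) := by gcongr

variable {f : 𝕜 → 𝕜} {a : ℕ → 𝕜} {x : 𝕜} {r : ENNReal}

theorem HasFPowerSeriesOnBall.hasSum_ofScalars (hf : HasFPowerSeriesOnBall f (ofScalars 𝕜 a) x r)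
    {y : 𝕜} (hy : y ∈ Metric.eball 0 r) : HasSum (fun n ↦ a n * y ^ n) (f (x + y)) := by
  simpa [ofScalars_apply_eq, mul_comm] using hf.hasSum hy

variable [CompleteSpace 𝕜]

theorem HasFPowerSeriesOnBall.deriv_ofScalars (hf : HasFPowerSeriesOnBall f (ofScalars 𝕜 a) x r) :
    HasFPowerSeriesOnBall (deriv f) (ofScalars 𝕜 fun n ↦ (n + 1) * a (n + 1)) x r := by
  -- `deriv f = fderiv f · 1`, so the series of `deriv f` is `derivSeries` evaluated at `1`.
  have hseries : (ContinuousLinearMap.apply 𝕜 𝕜 (1 : 𝕜)).compFormalMultilinearSeries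
      (ofScalars 𝕜 a).derivSeries = ofScalars 𝕜 fun n ↦ (n + 1) * a (n + 1) := by
    refine FormalMultilinearSeries.ext fun n ↦ ?_
    refine (mkPiRing_coeff_eq _ n).symm.trans (.trans ?_ (mkPiRing_coeff_eq _ n))
    rw [coeff_ofScalars]
    congr 1
    simp only [FormalMultilinearSeries.coeff, ContinuousLinearMap.compFormalMultilinearSeries_apply,
      ContinuousLinearMap.compContinuousMultilinearMap_coe, Function.comp_apply,
      ContinuousLinearMap.apply_apply]
    rw [← FormalMultilinearSeries.coeff, derivSeries_coeff_one, coeff_ofScalars, nsmul_eq_mul]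
    push_cast
    ring
  rw [← hseries]
  exact (ContinuousLinearMap.apply 𝕜 𝕜 (1 : 𝕜)).comp_hasFPowerSeriesOnBall hf.fderiv

theorem HasFPowerSeriesOnBall.hasSum_mul_deriv_ofScalars
    (hf : HasFPowerSeriesOnBall f (ofScalars 𝕜 a) x r) {y : 𝕜} (hy : y ∈ Metric.eball 0 r) :
    HasSum (fun n ↦ n * a n * y ^ n) (y * deriv f (x + y)) := by
  refine (hasSum_nat_add_iff' 1).mp ?_
  simpa [pow_succ', mul_assoc, mul_left_comm y] using
    (hf.deriv_ofScalars.hasSum_ofScalars hy).mul_left y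

end ScalarPowerSeries

noncomputable def kummerCoeff (γ β : ℝ) (n : ℕ) : ℝ :=
  (ascPochhammer ℝ n).eval γ / ((ascPochhammer ℝ n).eval β * n.factorial)

theorem kummerCoeff_succ (γ β : ℝ) (n : ℕ) :
    kummerCoeff γ β (n + 1) = (γ + n) / ((β + n) * (n + 1)) * kummerCoeff γ β n := by
  rw [kummerCoeff, kummerCoeff, ascPochhammer_succ_eval, ascPochhammer_succ_eval,
    Nat.factorial_succ, div_mul_div_comm]
  push_cast
  ring_nf

theorem kummerCoeff_recurrence {γ β : ℝ} {n : ℕ} (hβ : β + n ≠ 0) :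
    (n + β) * ((n + 1) * kummerCoeff γ β (n + 1)) = (n + γ) * kummerCoeff γ β n := by
  rw [kummerCoeff_succ]
  field_simp
  ring

theorem tendsto_kummerCoeff_ratio (γ β : ℝ) :
    Tendsto (fun n : ℕ ↦ (γ + n) / ((β + n) * (n + 1))) atTop (𝓝 0) := by
  have h := (tendsto_add_mul_div_add_mul_atTop_nhds γ β 1 one_ne_zero).mul
    tendsto_one_div_add_atTop_nhds_zero_nat
  simp only [one_mul, div_one, mul_zero] at h
  refine h.congr fun n ↦ ?_
  rw [div_mul_div_comm, mul_one]

theorem ofScalars_kummerCoeff_radius (γ β : ℝ) : (ofScalars ℝ (kummerCoeff γ β)).radius = ⊤ :=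
  ofScalars_radius_eq_top_of_norm_succ_le
    (by simpa only [norm_zero] using (tendsto_kummerCoeff_ratio γ β).norm) fun n ↦ by
      rw [kummerCoeff_succ, norm_mul]

theorem hasFPowerSeriesOnBall_M (γ β : ℝ) :
    HasFPowerSeriesOnBall (M γ β) (ofScalars ℝ (kummerCoeff γ β)) 0 ⊤ := by
  have h := (ofScalars ℝ (kummerCoeff γ β)).hasFPowerSeriesOnBall
    (by simp [ofScalars_kummerCoeff_radius])
  rw [ofScalars_kummerCoeff_radius] at h
  convert h using 1
  funext z
  simp only [M, FormalMultilinearSeries.sum, ofScalars_apply_eq, kummerCoeff, smul_eq_mul]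
  congr 1 with n
  ring

theorem stmt_7 (γ β : ℝ) (hβ : ∀ n : ℕ, β ≠ -(n : ℝ)) :
    ContDiff ℝ 2 (fun z => M γ β z) ∧
    ∀ z : ℝ,
      z * deriv (deriv (fun z => M γ β z)) z + (β - z) * deriv (fun z => M γ β z) z -
        γ * M γ β z = 0 := by
  have hβn : ∀ n : ℕ, β + n ≠ 0 := fun n h ↦ hβ n (by linarith)
  have hM := hasFPowerSeriesOnBall_M γ β
  have hM' := hM.deriv_ofScalars
  have hentire : AnalyticOnNhd ℝ (M γ β) Set.univ := by simpa using hM.analyticOnNhd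
  refine ⟨hentire.contDiff, fun z ↦ ?_⟩
  have hz : z ∈ Metric.eball (0 : ℝ) ⊤ := by simp
  have hsum := (((hM'.hasSum_mul_deriv_ofScalars hz).add
    ((hM'.hasSum_ofScalars hz).mul_left β)).sub (hM.hasSum_mul_deriv_ofScalars hz)).sub
    ((hM.hasSum_ofScalars hz).mul_left γ)
  simp only [zero_add] at hsum
  rw [show (fun n : ℕ ↦ _) = fun _ ↦ (0 : ℝ) from funext fun n ↦ by
    linear_combination z ^ n * kummerCoeff_recurrence (γ := γ) (hβn n)] at hsum
  linear_combination hsum.unique hasSum_zero
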